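/- arXiv:2211.06911 — 7 statements merged into one kernel-verified Lean document; each statement's English description precedes it below -/
import Mathlib

section
/- Let H be a group, P ≤ H a subgroup, G' a group, α : H × (H/P) → G' a cocycle, and s : H/P → H a section with s(x)·P = x for every coset x. Then for all h₁ ∈ H and x ∈ H/P, α(h₁, x) = α(s(h₁·x), [1]) · ρ_α(s(h₁·x)⁻¹·h₁·s(x)) · α(s(x), [1])⁻¹, where ρ_α(p) = α(p, [1]) (note that s(h₁·x)⁻¹·h₁·s(x) ∈ P). -/
/-- For a cocycle `α : H × (H/P) → G'` and a section `s : H/P → H`,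
one has `s(h₁•x)⁻¹ h₁ s(x) ∈ P` and
`α(h₁,x) = α(s(h₁•x), [1]) · ρ_α(s(h₁•x)⁻¹ h₁ s(x)) · α(s(x), [1])⁻¹`,
where `ρ_α(p) = α(p, [1])`. -/
theorem stmt6 {H G' : Type*} [Group H] [Group G'] (P : Subgroup H)
    (α : H → H ⧸ P → G')
    (hcoc : ∀ (g₁ g₂ : H) (x : H ⧸ P), α (g₁ * g₂) x = α g₁ (g₂ • x) * α g₂ x)
    (s : H ⧸ P → H) (hs : ∀ x : H ⧸ P, ((s x : H) : H ⧸ P) = x) :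
    (∀ (h₁ : H) (x : H ⧸ P), (s (h₁ • x))⁻¹ * h₁ * s x ∈ P) ∧
    (∀ (h₁ : H) (x : H ⧸ P),
      α h₁ x = α (s (h₁ • x)) ((1 : H) : H ⧸ P) *
        α ((s (h₁ • x))⁻¹ * h₁ * s x) ((1 : H) : H ⧸ P) *
        (α (s x) ((1 : H) : H ⧸ P))⁻¹) := by
  have smul_mk : ∀ (h g : H), h • ((g : H ⧸ P)) = ((h * g : H) : H ⧸ P) := fun h g => rfl
  have hmem : ∀ (h₁ : H) (x : H ⧸ P), (s (h₁ • x))⁻¹ * h₁ * s x ∈ P := by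
    intro h₁ x
    rw [mul_assoc]
    rw [← QuotientGroup.eq]
    rw [← smul_mk, hs, hs]
  refine ⟨hmem, fun h₁ x => ?_⟩
  set p := (s (h₁ • x))⁻¹ * h₁ * s x with hp
  have hps : h₁ * s x = s (h₁ • x) * p := by
    rw [hp]; group
  have h1 : α (h₁ * s x) ((1 : H) : H ⧸ P) = α h₁ x * α (s x) ((1 : H) : H ⧸ P) := by
    rw [hcoc, smul_mk, mul_one, hs]
  have hpx : p • ((1 : H) : H ⧸ P) = ((1 : H) : H ⧸ P) := by
    rw [smul_mk, mul_one, QuotientGroup.eq]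
    simpa using hmem h₁ x
  have h2 : α (h₁ * s x) ((1 : H) : H ⧸ P) =
      α (s (h₁ • x)) ((1 : H) : H ⧸ P) * α p ((1 : H) : H ⧸ P) := by
    rw [hps, hcoc, hpx]
  rw [← h2, h1]
  group
end

section
/- Let H be a group, P ≤ H a subgroup, G' a group, and suppose there is a section s : H/P → H with s(x)·P = x for every coset x and s([1]) = 1. Then the map α ↦ ρ_α, sending a cocycle α : H × (H/P) → G' to its induced homomorphism ρ_α : P → G', ρ_α(p) = α(p, [1]), is surjective onto the set of group homomorphisms P → G'; moreover, two cocycles α and β are equivalent if and only if ρ_α and ρ_β are conjugate by an element of G', i.e. there is l ∈ G' with ρ_α(p) = l·ρ_β(p)·l⁻¹ for all p ∈ P. -/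
/-- Given a normalized section `s : H/P → H`, the map `α ↦ ρ_α` from
cocycles `H × (H/P) → G'` to homomorphisms `P → G'` is surjective, and two cocycles
are equivalent iff their induced homomorphisms are conjugate in `G'`. -/
theorem stmt8 {H G' : Type*} [Group H] [Group G'] (P : Subgroup H)
    (s : H ⧸ P → H) (hs : ∀ x : H ⧸ P, ((s x : H) : H ⧸ P) = x)
    (hs1 : s ((1 : H) : H ⧸ P) = 1) :
    (∀ ρ : P →* G', ∃ α : H → H ⧸ P → G',
      (∀ (g₁ g₂ : H) (x : H ⧸ P), α (g₁ * g₂) x = α g₁ (g₂ • x) * α g₂ x) ∧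
      ∀ p : P, α (p : H) ((1 : H) : H ⧸ P) = ρ p) ∧
    (∀ α β : H → H ⧸ P → G',
      (∀ (g₁ g₂ : H) (x : H ⧸ P), α (g₁ * g₂) x = α g₁ (g₂ • x) * α g₂ x) →
      (∀ (g₁ g₂ : H) (x : H ⧸ P), β (g₁ * g₂) x = β g₁ (g₂ • x) * β g₂ x) →
      ((∃ φ : H ⧸ P → G', ∀ (g : H) (x : H ⧸ P),
          α g x = (φ (g • x))⁻¹ * β g x * φ x) ↔
        (∃ l : G', ∀ p : P,
          α (p : H) ((1 : H) : H ⧸ P) = l * β (p : H) ((1 : H) : H ⧸ P) * l⁻¹))) := by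
  have smul_mk : ∀ (g h : H), g • ((h : H ⧸ P)) = ((g * h : H) : H ⧸ P) := fun _ _ => rfl
  -- elements of P fix the trivial coset
  have h1 : ∀ p : H, p ∈ P → p • ((1 : H) : H ⧸ P) = ((1 : H) : H ⧸ P) := by
    intro p hp
    rw [smul_mk, mul_one]
    exact QuotientGroup.eq.2 (by simpa using P.inv_mem hp)
  -- the key membership fact
  have hmem : ∀ (g : H) (x : H ⧸ P), (s (g • x))⁻¹ * g * s x ∈ P := by
    intro g x
    have h : ((s (g • x) : H) : H ⧸ P) = ((g * s x : H) : H ⧸ P) := by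
      rw [hs, ← smul_mk, hs]
    simpa [mul_assoc] using QuotientGroup.eq.1 h
  have sx_smul : ∀ x : H ⧸ P, s x • ((1 : H) : H ⧸ P) = x := by
    intro x; rw [smul_mk, mul_one, hs]
  -- decomposition of a cocycle in terms of its values on the trivial coset
  have decomp : ∀ (α : H → H ⧸ P → G'),
      (∀ (g₁ g₂ : H) (x : H ⧸ P), α (g₁ * g₂) x = α g₁ (g₂ • x) * α g₂ x) →
      ∀ (g : H) (x : H ⧸ P),
        α g x = α (s (g • x)) ((1 : H) : H ⧸ P)
          * α ((s (g • x))⁻¹ * g * s x) ((1 : H) : H ⧸ P)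
          * (α (s x) ((1 : H) : H ⧸ P))⁻¹ := by
    intro α hα g x
    have e1 : α (g * s x) ((1 : H) : H ⧸ P) = α g x * α (s x) ((1 : H) : H ⧸ P) := by
      rw [hα g (s x) _, sx_smul]
    have e2 : g * s x = s (g • x) * ((s (g • x))⁻¹ * g * s x) := by group
    have e3 : α (g * s x) ((1 : H) : H ⧸ P)
        = α (s (g • x)) ((1 : H) : H ⧸ P)
          * α ((s (g • x))⁻¹ * g * s x) ((1 : H) : H ⧸ P) := by
      rw [e2, hα, h1 _ (hmem g x)]
    exact eq_mul_inv_of_mul_eq (e1.symm.trans e3)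
  constructor
  · -- surjectivity
    intro ρ
    refine ⟨fun g x => ρ ⟨(s (g • x))⁻¹ * g * s x, hmem g x⟩, ?_, ?_⟩
    · intro g₁ g₂ x
      rw [← map_mul]
      have : (⟨(s ((g₁ * g₂) • x))⁻¹ * (g₁ * g₂) * s x, hmem (g₁ * g₂) x⟩ : P)
          = ⟨(s (g₁ • g₂ • x))⁻¹ * g₁ * s (g₂ • x), hmem g₁ (g₂ • x)⟩
            * ⟨(s (g₂ • x))⁻¹ * g₂ * s x, hmem g₂ x⟩ := by
        ext
        simp only [Subgroup.coe_mul]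
        rw [mul_smul]
        group
      exact congrArg ρ this
    · intro p
      have : (⟨(s ((p : H) • ((1 : H) : H ⧸ P)))⁻¹ * (p : H) * s ((1 : H) : H ⧸ P),
          hmem (p : H) ((1 : H) : H ⧸ P)⟩ : P) = p := by
        ext
        simp only []
        rw [h1 _ p.2, hs1]
        group
      exact congrArg ρ this
  · -- equivalence iff conjugate
    intro α β hα hβ
    constructor
    · rintro ⟨φ, hφ⟩
      refine ⟨(φ ((1 : H) : H ⧸ P))⁻¹, fun p => ?_⟩
      have := hφ (p : H) ((1 : H) : H ⧸ P)
      rw [h1 _ p.2] at this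
      rw [this]
      group
    · rintro ⟨l, hl⟩
      refine ⟨fun x => β (s x) ((1 : H) : H ⧸ P) * l⁻¹
        * (α (s x) ((1 : H) : H ⧸ P))⁻¹, fun g x => ?_⟩
      have key : α ((s (g • x))⁻¹ * g * s x) ((1 : H) : H ⧸ P)
          = l * β ((s (g • x))⁻¹ * g * s x) ((1 : H) : H ⧸ P) * l⁻¹ :=
        hl ⟨(s (g • x))⁻¹ * g * s x, hmem g x⟩
      rw [decomp α hα g x, decomp β hβ g x, key]
      group
end

section
/- Let H be a group, P ≤ H a subgroup, G' a group, and suppose there is a section s : H/P → H with s(x)·P = x for every coset x and s([1]) = 1. Let α : H × (H/P) → G' be a cocycle whose induced homomorphism ρ_α : P → G', ρ_α(p) = α(p, [1]), extends to a group homomorphism τ : H → G' (i.e. τ(p) = ρ_α(p) for all p ∈ P). Then α is equivalent to the morphism-type cocycle (g, x) ↦ τ(g): there exists a map φ : H/P → G' such that α(g, x) = φ(g·x)⁻¹·τ(g)·φ(x) for all g ∈ H and x ∈ H/P. -/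
/-- If the induced homomorphism `ρ_α : P → G'` of a cocycle `α`
extends to a homomorphism `τ : H → G'`, then `α` is equivalent to the
morphism-type cocycle `(g, x) ↦ τ(g)`. -/
theorem stmt9 {H G' : Type*} [Group H] [Group G'] (P : Subgroup H)
    (s : H ⧸ P → H) (hs : ∀ x : H ⧸ P, ((s x : H) : H ⧸ P) = x)
    (hs1 : s ((1 : H) : H ⧸ P) = 1)
    (α : H → H ⧸ P → G')
    (hcoc : ∀ (g₁ g₂ : H) (x : H ⧸ P), α (g₁ * g₂) x = α g₁ (g₂ • x) * α g₂ x)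
    (τ : H →* G')
    (hτ : ∀ p : P, τ (p : H) = α (p : H) ((1 : H) : H ⧸ P)) :
    ∃ φ : H ⧸ P → G', ∀ (g : H) (x : H ⧸ P),
      α g x = (φ (g • x))⁻¹ * τ g * φ x := by
  refine ⟨fun x => τ (s x) * (α (s x) ((1 : H) : H ⧸ P))⁻¹, fun g x => ?_⟩
  set p : H := (s (g • x))⁻¹ * (g * s x) with hpdef
  have hsmul : ∀ (a : H) (b : H), a • ((b : H ⧸ P)) = ((a * b : H) : H ⧸ P) := by
    intro a b; rfl
  have hx : g • x = ((g * s x : H) : H ⧸ P) := by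
    conv_lhs => rw [← hs x]
    exact hsmul g (s x)
  have hp : p ∈ P := by
    rw [hpdef, ← QuotientGroup.eq]
    rw [hs, hx]
  have hp1 : p • ((1 : H) : H ⧸ P) = ((1 : H) : H ⧸ P) := by
    rw [hsmul, mul_one, QuotientGroup.eq]
    simpa using P.inv_mem hp
  have hτp : τ p = α p ((1 : H) : H ⧸ P) := hτ ⟨p, hp⟩
  have h1 : α (g * s x) ((1 : H) : H ⧸ P) = α g x * α (s x) ((1 : H) : H ⧸ P) := by
    rw [hcoc, hsmul, mul_one, hs]
  have h2 : α (g * s x) ((1 : H) : H ⧸ P)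
      = α (s (g • x)) ((1 : H) : H ⧸ P) * α p ((1 : H) : H ⧸ P) := by
    have : g * s x = s (g • x) * p := by rw [hpdef]; group
    rw [this, hcoc, hp1]
  have hτg : τ g = τ (s (g • x)) * τ p * (τ (s x))⁻¹ := by
    rw [← map_mul, ← map_inv, ← map_mul]
    congr 1
    rw [hpdef]; group
  have halpha : α g x = α (s (g • x)) ((1 : H) : H ⧸ P) * α p ((1 : H) : H ⧸ P)
      * (α (s x) ((1 : H) : H ⧸ P))⁻¹ := by
    rw [← h2, h1]; group
  rw [halpha, hτg, ← hτp]
  group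
end

section
/- Let X be a separable metric space, m a Borel probability measure on X, and T : X → X a measurable, m-measure-preserving, ergodic transformation. Then for every measurable set K ⊆ X with m(K) > 0 there exists a closed set K̇ ⊆ X with m(K \ K̇) = 0 such that the set K₁ := {x ∈ K : K̇ ⊆ closure(K ∩ {Tⁿ x : n ≥ 1})} satisfies m(K \ K₁) = 0; that is, for m-almost every x ∈ K, the closure of the part of the forward T-orbit of x that lies in K contains K̇. -/
open MeasureTheory

open Metric

section Aux

variable {X : Type*} [MetricSpace X] [MeasurableSpace X] [BorelSpace X]

/-- Ergodic hitting lemma: a.e. point eventually enters any positive measure set. -/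
lemma ergodic_hit (m : Measure X) [IsProbabilityMeasure m] {T : X → X} (hT : Ergodic T m)
    {A : Set X} (hA : MeasurableSet A) (hApos : 0 < m A) :
    ∀ᵐ x ∂m, ∃ n : ℕ, T^[n + 1] x ∈ A := by
  set S : Set X := ⋃ n : ℕ, (fun x => T^[n + 1] x) ⁻¹' A with hS
  have hSmeas : MeasurableSet S :=
    MeasurableSet.iUnion fun n => (hT.measurable.iterate (n + 1)) hA
  have hsub : T ⁻¹' S ⊆ S := by
    rintro x hx
    simp only [hS, Set.mem_preimage, Set.mem_iUnion] at hx ⊢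
    obtain ⟨n, hn⟩ := hx
    exact ⟨n + 1, by rwa [Function.iterate_succ_apply]⟩
  rcases hT.ae_empty_or_univ_of_preimage_ae_le hSmeas.nullMeasurableSet hsub.eventuallyLE with
    h | h
  · exfalso
    have h1 : (fun x => T^[1] x) ⁻¹' A ⊆ S :=
      Set.subset_iUnion (fun n : ℕ => (fun x => T^[n + 1] x) ⁻¹' A) 0
    have h2 : m ((fun x => T^[1] x) ⁻¹' A) = m A :=
      (hT.toMeasurePreserving.iterate 1).measure_preimage hA.nullMeasurableSet
    have : m S = 0 := by
      calc m S = m (∅ : Set X) := measure_congr h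
      _ = 0 := measure_empty
    exact absurd (le_trans (h2 ▸ measure_mono h1) this.le) (by simpa using hApos.ne')
  · have : m Sᶜ = 0 := by
      have := measure_congr h
      simp only [measure_univ] at this
      have hcompl := measure_compl hSmeas (measure_ne_top m S)
      rw [this] at hcompl
      simpa using hcompl
    have hae : ∀ᵐ x ∂m, x ∈ S := by
      rw [MeasureTheory.ae_iff]
      exact this
    filter_upwards [hae] with x hx
    exact Set.mem_iUnion.1 hx

end Aux

section Main

variable {X : Type*} [MetricSpace X] [TopologicalSpace.SeparableSpace X]
    [MeasurableSpace X] [BorelSpace X]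

theorem stmt12' (m : Measure X) [IsProbabilityMeasure m] (T : X → X) (hT : Ergodic T m)
    (K : Set X) (hKmeas : MeasurableSet K) (hKpos : 0 < m K) :
    ∃ Kdot : Set X, IsClosed Kdot ∧ m (K \ Kdot) = 0 ∧
      m (K \ {x ∈ K | Kdot ⊆ closure (K ∩ Set.range fun k : ℕ => T^[k + 1] x)}) = 0 := by
  classical
  set Kdot : Set X := {x | ∀ ε : ℝ, 0 < ε → 0 < m (K ∩ ball x ε)} with hKdot
  -- Kdot is closed
  have hclosed : IsClosed Kdot := by
    rw [← isOpen_compl_iff, Metric.isOpen_iff]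
    intro x hx
    simp only [hKdot, Set.mem_compl_iff, Set.mem_setOf_eq, not_forall] at hx
    obtain ⟨ε, hε, hzero⟩ := hx
    push_neg at hzero
    refine ⟨ε / 2, by linarith, fun y hy => ?_⟩
    simp only [hKdot, Set.mem_compl_iff, Set.mem_setOf_eq, not_forall]
    refine ⟨ε / 2, by linarith, ?_⟩
    push_neg
    have hsub : ball y (ε / 2) ⊆ ball x ε := by
      intro z hz
      have := mem_ball.1 hy
      have := mem_ball.1 hz
      rw [mem_ball]
      calc dist z x ≤ dist z y + dist y x := dist_triangle z y x
        _ < ε / 2 + ε / 2 := by linarith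
        _ = ε := by ring
    exact le_trans (measure_mono (Set.inter_subset_inter_right K hsub)) hzero
  -- countable dense set
  obtain ⟨D, hDc, hDd⟩ := TopologicalSpace.exists_countable_dense X
  -- K \ Kdot is null
  have hnull : m (K \ Kdot) = 0 := by
    set I0 : Set (X × ℚ) := {p | p.1 ∈ D ∧ m (K ∩ ball p.1 (p.2 : ℝ)) = 0} with hI0
    have hI0c : I0.Countable := (hDc.prod Set.countable_univ).mono
      (fun p (hp : p ∈ I0) => Set.mem_prod.2 ⟨hp.1, Set.mem_univ _⟩)
    have hcover : K \ Kdot ⊆ ⋃ p ∈ I0, (K ∩ ball p.1 (p.2 : ℝ)) := by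
      rintro x ⟨hxK, hxn⟩
      simp only [hKdot, Set.mem_setOf_eq, not_forall] at hxn
      obtain ⟨ε, hε, hzero⟩ := hxn
      push_neg at hzero
      have hz : m (K ∩ ball x ε) = 0 := le_antisymm hzero zero_le
      obtain ⟨c, hcD, hc⟩ := hDd.exists_dist_lt x (by positivity : (0:ℝ) < ε / 4)
      obtain ⟨q, hq1, hq2⟩ := exists_rat_btwn (by linarith : (ε/4 : ℝ) < ε/2)
      have hsub : ball c (q : ℝ) ⊆ ball x ε := by
        intro z hz'
        rw [mem_ball] at hz' ⊢
        have : dist x c < ε / 4 := hc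
        calc dist z x ≤ dist z c + dist c x := dist_triangle z c x
          _ < q + ε / 4 := by rw [dist_comm c x]; linarith
          _ < ε := by linarith
      have hmem : (c, q) ∈ I0 := by
        refine ⟨hcD, le_antisymm ?_ zero_le⟩
        exact le_trans (measure_mono (Set.inter_subset_inter_right K hsub)) hz.le
      refine Set.mem_biUnion hmem ⟨hxK, ?_⟩
      rw [mem_ball]
      calc dist x c < ε / 4 := hc
        _ < q := hq1
    refine measure_mono_null hcover ?_
    refine (measure_biUnion_null_iff hI0c).2 fun p hp => hp.2
  refine ⟨Kdot, hclosed, hnull, ?_⟩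
  -- the good set from ergodicity
  set I1 : Set (X × ℚ) := {p | p.1 ∈ D ∧ 0 < m (K ∩ ball p.1 (p.2 : ℝ))} with hI1
  have hI1c : I1.Countable := (hDc.prod Set.countable_univ).mono
    (fun p (hp : p ∈ I1) => Set.mem_prod.2 ⟨hp.1, Set.mem_univ _⟩)
  have hG : ∀ᵐ x ∂m, ∀ p ∈ I1, ∃ n : ℕ, T^[n + 1] x ∈ K ∩ ball p.1 (p.2 : ℝ) := by
    rw [MeasureTheory.ae_ball_iff hI1c]
    intro p hp
    exact ergodic_hit m hT (hKmeas.inter measurableSet_ball) hp.2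
  have hGset : m {x | ¬ ∀ p ∈ I1, ∃ n : ℕ, T^[n + 1] x ∈ K ∩ ball p.1 (p.2 : ℝ)} = 0 :=
    MeasureTheory.ae_iff.1 hG
  refine measure_mono_null ?_ hGset
  rintro x ⟨hxK, hxn⟩
  intro hcon
  apply hxn
  refine ⟨hxK, fun y hy => ?_⟩
  rw [Metric.mem_closure_iff]
  intro ε hε
  obtain ⟨c, hcD, hc⟩ := hDd.exists_dist_lt y (show (0:ℝ) < ε / 4 by linarith)
  obtain ⟨q, hq1, hq2⟩ := exists_rat_btwn (show (ε / 4 : ℝ) < ε / 2 by linarith)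
  have hc' : dist y c < ε / 4 := hc
  have hδ : (0:ℝ) < (q : ℝ) - dist y c := by linarith
  have hposy := hy _ hδ
  have hsub : ball y ((q : ℝ) - dist y c) ⊆ ball c (q : ℝ) := by
    intro z hz
    rw [mem_ball] at hz ⊢
    calc dist z c ≤ dist z y + dist y c := dist_triangle _ _ _
      _ < q := by linarith
  have hpI : (c, q) ∈ I1 :=
    ⟨hcD, lt_of_lt_of_le hposy (measure_mono (Set.inter_subset_inter_right K hsub))⟩
  obtain ⟨n, hn⟩ := hcon _ hpI
  refine ⟨T^[n + 1] x, ⟨hn.1, ⟨n, rfl⟩⟩, ?_⟩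
  have hdz : dist (T^[n + 1] x) c < q := mem_ball.1 hn.2
  calc dist y (T^[n + 1] x) ≤ dist y c + dist c (T^[n + 1] x) := dist_triangle _ _ _
    _ < ε / 4 + q := by rw [dist_comm c]; exact add_lt_add hc' hdz
    _ < ε := by linarith

end Main

/-- (Relative density of typical points) For an ergodic
measure-preserving transformation `T` of a separable metric probability space
and any set `K` of positive measure, there is a closed set `K̇` conull in `K`
such that for a.e. `x ∈ K`, the closure of the part of the forward orbit of `x`
lying in `K` contains `K̇`. -/
theorem stmt12 {X : Type*} [MetricSpace X] [TopologicalSpace.SeparableSpace X]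
    [MeasurableSpace X] [BorelSpace X]
    (m : Measure X) [IsProbabilityMeasure m] (T : X → X) (hT : Ergodic T m)
    (K : Set X) (hKmeas : MeasurableSet K) (hKpos : 0 < m K) :
    ∃ Kdot : Set X, IsClosed Kdot ∧ m (K \ Kdot) = 0 ∧
      m (K \ {x ∈ K | Kdot ⊆ closure (K ∩ Set.range fun k : ℕ => T^[k + 1] x)}) = 0 := by
  exact stmt12' m T hT K hKmeas hKpos
end

section
/- Let κ ≥ 1 and δ > 0 be real numbers, N ∈ ℕ, and λ : ℕ → ℝ a function with λ(0) = 0 and (m − n)/κ ≤ λ(m) − λ(n) ≤ κ(m − n) for all m > n; for t > 0 let n_t := min{n ∈ ℕ : λ(n) ≥ t}. Let B ⊆ ℕ be a set such that #(B ∩ {1, …, n}) ≤ δ·n for every n ≥ N. Then for every integer T with T ≥ κ·N, #{t ∈ {1, …, T} : n_t ∈ B} ≤ (κ + 1)·δ·(κ·T + 1). -/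
/-- If the set `B` of bad times has density at most `δ` in `{1,…,n}`
for all `n ≥ N`, then for `T ≥ κ N`, the number of levels `t ∈ {1,…,T}` whose
first-passage time `n_t = min{n : L n ≥ t}` lands in `B` is at most
`(κ+1)·δ·(κ·T+1)`. -/
theorem stmt14 (κ δ : ℝ) (hκ : 1 ≤ κ) (hδ : 0 < δ) (N : ℕ)
    (L : ℕ → ℝ) (hL0 : L 0 = 0)
    (hlip : ∀ m n : ℕ, n < m →
      ((m : ℝ) - (n : ℝ)) / κ ≤ L m - L n ∧ L m - L n ≤ κ * ((m : ℝ) - (n : ℝ)))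
    (B : Set ℕ) [DecidablePred (· ∈ B)]
    (hB : ∀ n : ℕ, N ≤ n →
      (((Finset.Icc 1 n).filter (· ∈ B)).card : ℝ) ≤ δ * (n : ℝ))
    (T : ℕ) (hT : κ * (N : ℝ) ≤ (T : ℝ)) :
    (((Finset.Icc 1 T).filter
        (fun t : ℕ => sInf {n : ℕ | (t : ℝ) ≤ L n} ∈ B)).card : ℝ) ≤
      (κ + 1) * δ * (κ * (T : ℝ) + 1) := by
  have hκ0 : (0:ℝ) < κ := lt_of_lt_of_le one_pos hκ
  have hLnn : ∀ k : ℕ, (0:ℝ) ≤ L k := by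
    intro k
    rcases Nat.eq_zero_or_pos k with h | h
    · simp [h, hL0]
    · have h1 := (hlip k 0 h).1
      rw [hL0] at h1
      have h2 : (0:ℝ) ≤ ((k:ℝ) - ((0:ℕ):ℝ)) / κ := by
        simp only [Nat.cast_zero, sub_zero]
        positivity
      linarith
  rcases Nat.eq_zero_or_pos T with hT0 | hT1
  · subst hT0
    have he : Finset.Icc 1 0 = (∅ : Finset ℕ) := by simp
    rw [he, Finset.filter_empty]
    simp only [Finset.card_empty, Nat.cast_zero, Nat.cast_ofNat]
    nlinarith
  set M := ⌈κ * (T:ℝ)⌉₊ with hMdef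
  have hκT0 : (0:ℝ) ≤ κ * T := by positivity
  have hMge : κ * (T:ℝ) ≤ M := Nat.le_ceil _
  have hMle : (M:ℝ) ≤ κ * T + 1 := le_of_lt (Nat.ceil_lt_add_one hκT0)
  have hNM : N ≤ M := by
    have h : (N:ℝ) ≤ (M:ℝ) := by nlinarith
    exact_mod_cast h
  have hM1 : 1 ≤ M := by
    have hT1' : (1:ℝ) ≤ T := by exact_mod_cast hT1
    have h : (1:ℝ) ≤ (M:ℝ) := by nlinarith
    exact_mod_cast h
  have hLM : (T:ℝ) ≤ L M := by
    have h1 := (hlip M 0 hM1).1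
    rw [hL0] at h1
    have h2 : (T:ℝ) ≤ ((M:ℝ) - ((0:ℕ):ℝ)) / κ := by
      rw [le_div_iff₀ hκ0]
      push_cast
      nlinarith
    linarith
  have hset : ∀ t : ℕ, 1 ≤ t → t ≤ T → M ∈ {n : ℕ | (t:ℝ) ≤ L n} := by
    intro t ht1 ht2
    have h : (t:ℝ) ≤ T := by exact_mod_cast ht2
    exact le_trans h hLM
  have hnt_mem : ∀ t : ℕ, 1 ≤ t → t ≤ T →
      (t:ℝ) ≤ L (sInf {n : ℕ | (t:ℝ) ≤ L n}) :=
    fun t h1 h2 => Nat.sInf_mem ⟨M, hset t h1 h2⟩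
  have hnt_le : ∀ t : ℕ, 1 ≤ t → t ≤ T → sInf {n : ℕ | (t:ℝ) ≤ L n} ≤ M :=
    fun t h1 h2 => Nat.sInf_le (hset t h1 h2)
  have hnt_pos : ∀ t : ℕ, 1 ≤ t → t ≤ T → 1 ≤ sInf {n : ℕ | (t:ℝ) ≤ L n} := by
    intro t h1 h2
    have hm := hnt_mem t h1 h2
    rcases Nat.eq_zero_or_pos (sInf {n : ℕ | (t:ℝ) ≤ L n}) with h0 | h0
    · rw [h0, hL0] at hm
      have ht : (1:ℝ) ≤ t := by exact_mod_cast h1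
      linarith
    · exact h0
  have hnt_lt : ∀ t : ℕ, 1 ≤ t → t ≤ T →
      L (sInf {n : ℕ | (t:ℝ) ≤ L n} - 1) < t := by
    intro t h1 h2
    have hp := hnt_pos t h1 h2
    have hlt : sInf {n : ℕ | (t:ℝ) ≤ L n} - 1 < sInf {n : ℕ | (t:ℝ) ≤ L n} := by
      omega
    have hnm := Nat.notMem_of_lt_sInf hlt
    simp only [Set.mem_setOf_eq, not_le] at hnm
    exact hnm
  set S := (Finset.Icc 1 T).filter
      (fun t : ℕ => sInf {n : ℕ | (t : ℝ) ≤ L n} ∈ B) with hSdef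
  set G := (Finset.Icc 1 M).filter (· ∈ B) with hGdef
  have hmap : ∀ t ∈ S, sInf {n : ℕ | (t:ℝ) ≤ L n} ∈ G := by
    intro t ht
    rw [hSdef] at ht
    simp only [Finset.mem_filter, Finset.mem_Icc] at ht
    rw [hGdef]
    simp only [Finset.mem_filter, Finset.mem_Icc]
    exact ⟨⟨hnt_pos t ht.1.1 ht.1.2, hnt_le t ht.1.1 ht.1.2⟩, ht.2⟩
  have hcard := Finset.card_eq_sum_card_fiberwise hmap
  have hfib : ∀ n ∈ G,
      ((S.filter (fun t : ℕ => sInf {n' : ℕ | (t:ℝ) ≤ L n'} = n)).card : ℝ) ≤ κ + 1 := by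
    intro n hn
    have hn1 : 1 ≤ n := by
      rw [hGdef] at hn
      simp only [Finset.mem_filter, Finset.mem_Icc] at hn
      exact hn.1.1
    have hsub : S.filter (fun t : ℕ => sInf {n' : ℕ | (t:ℝ) ≤ L n'} = n) ⊆
        Finset.Icc (⌊L (n-1)⌋₊ + 1) ⌊L n⌋₊ := by
      intro t ht
      simp only [hSdef, Finset.mem_filter, Finset.mem_Icc] at ht
      obtain ⟨⟨⟨ht1, ht2⟩, _⟩, hte⟩ := ht
      have hmem := hnt_mem t ht1 ht2
      have hltt := hnt_lt t ht1 ht2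
      rw [hte] at hmem hltt
      simp only [Finset.mem_Icc]
      constructor
      · have hfl : ⌊L (n-1)⌋₊ < t := (Nat.floor_lt (hLnn _)).mpr hltt
        omega
      · exact Nat.le_floor hmem
    have hc := Finset.card_le_card hsub
    rw [Nat.card_Icc] at hc
    have h1 : (⌊L n⌋₊ : ℝ) ≤ L n := Nat.floor_le (hLnn n)
    have h2 : L (n-1) < (⌊L (n-1)⌋₊ : ℝ) + 1 := Nat.lt_floor_add_one _
    have h3 := (hlip n (n-1) (by omega)).2
    have h4 : ((n-1:ℕ):ℝ) = (n:ℝ) - 1 := by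
      push_cast [hn1]
      ring
    rw [h4] at h3
    have h5 : κ * ((n:ℝ) - ((n:ℝ) - 1)) = κ := by ring
    rw [h5] at h3
    rcases le_or_gt (⌊L (n-1)⌋₊ + 1) (⌊L n⌋₊ + 1) with hab | hab
    · have hcast : ((⌊L n⌋₊ + 1 - (⌊L (n-1)⌋₊ + 1) : ℕ) : ℝ) =
          ((⌊L n⌋₊:ℝ) + 1) - ((⌊L (n-1)⌋₊:ℝ) + 1) := by
        rw [Nat.cast_sub hab]
        push_cast
        ring
      have hc' : ((S.filter (fun t : ℕ => sInf {n' : ℕ | (t:ℝ) ≤ L n'} = n)).card : ℝ) ≤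
          ((⌊L n⌋₊ + 1 - (⌊L (n-1)⌋₊ + 1) : ℕ) : ℝ) := by exact_mod_cast hc
      linarith
    · have h0 : ⌊L n⌋₊ + 1 - (⌊L (n-1)⌋₊ + 1) = 0 := by omega
      rw [h0] at hc
      have hz : (S.filter (fun t : ℕ => sInf {n' : ℕ | (t:ℝ) ≤ L n'} = n)).card = 0 := by
        omega
      rw [hz]
      simp only [Nat.cast_zero]
      linarith
  have hsum : (S.card : ℝ) ≤ (G.card : ℝ) * (κ + 1) := by
    rw [hcard]
    push_cast
    calc (∑ n ∈ G, ((S.filter (fun t : ℕ => sInf {n' : ℕ | (t:ℝ) ≤ L n'} = n)).card : ℝ))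
        ≤ ∑ _n ∈ G, (κ+1) := Finset.sum_le_sum hfib
      _ = G.card * (κ+1) := by rw [Finset.sum_const, nsmul_eq_mul]
  have hG : (G.card:ℝ) ≤ δ * M := hB M hNM
  have hδM : δ * (M:ℝ) ≤ δ * (κ*T+1) := mul_le_mul_of_nonneg_left hMle hδ.le
  have hκ1 : (0:ℝ) ≤ κ + 1 := by linarith
  calc (S.card:ℝ) ≤ (G.card:ℝ)*(κ+1) := hsum
    _ ≤ (δ*(κ*T+1))*(κ+1) := mul_le_mul_of_nonneg_right (le_trans hG hδM) hκ1
    _ = (κ+1)*δ*(κ*T+1) := by ring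
end

section
/- Let κ ≥ 1 and C ≥ 0 be real numbers, t ∈ ℝ, let λ, λ' : ℕ → ℝ be functions, and let n, n' ∈ ℕ. Suppose λ'(m) − λ'(k) ≥ (m − k)/κ for all natural numbers m > k, and |λ(n) − t| ≤ κ, |λ'(n') − t| ≤ κ, |λ(n) − λ'(n)| ≤ C. Then |n − n'| ≤ κ·(2κ + C). -/
/-- If `L' m − L' k ≥ (m−k)/κ` for `m > k`, and `|L n − t| ≤ κ`,
`|L' n' − t| ≤ κ`, `|L n − L' n| ≤ C`, then `|n − n'| ≤ κ(2κ + C)`. -/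
theorem stmt15 (κ C t : ℝ) (hκ : 1 ≤ κ) (hC : 0 ≤ C)
    (L L' : ℕ → ℝ) (n n' : ℕ)
    (hlip : ∀ m k : ℕ, k < m → ((m : ℝ) - (k : ℝ)) / κ ≤ L' m - L' k)
    (h1 : |L n - t| ≤ κ) (h2 : |L' n' - t| ≤ κ) (h3 : |L n - L' n| ≤ C) :
    |(n : ℝ) - (n' : ℝ)| ≤ κ * (2 * κ + C) := by
  have hκ0 : (0:ℝ) < κ := lt_of_lt_of_le one_pos hκ
  have hd : |L' n - L' n'| ≤ 2 * κ + C := by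
    have : L' n - L' n' = (L' n - L n) + (L n - t) + (t - L' n') := by ring
    rw [this]
    calc |(L' n - L n) + (L n - t) + (t - L' n')|
        ≤ |(L' n - L n) + (L n - t)| + |t - L' n'| := abs_add_le _ _
      _ ≤ |L' n - L n| + |L n - t| + |t - L' n'| := by
          gcongr; exact abs_add_le _ _
      _ ≤ C + κ + κ := by
          gcongr
          · rw [abs_sub_comm]; exact h3
          · rw [abs_sub_comm]; exact h2
      _ = 2 * κ + C := by ring
  rcases lt_trichotomy n n' with h | h | h
  · have := hlip n' n h
    rw [abs_sub_comm, abs_of_nonneg (by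
      have := (Nat.cast_le (α := ℝ)).mpr h.le; linarith)]
    have hle : ((n':ℝ) - n) / κ ≤ 2 * κ + C := by
      have : L' n' - L' n ≤ |L' n - L' n'| := by
        rw [abs_sub_comm]; exact le_abs_self _
      linarith
    calc (n':ℝ) - n = κ * (((n':ℝ) - n) / κ) := by field_simp
      _ ≤ κ * (2 * κ + C) := by gcongr
  · simp [h]; positivity
  · have := hlip n n' h
    rw [abs_of_nonneg (by
      have := (Nat.cast_le (α := ℝ)).mpr h.le; linarith)]
    have hle : ((n:ℝ) - n') / κ ≤ 2 * κ + C := by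
      have : L' n - L' n' ≤ |L' n - L' n'| := le_abs_self _
      linarith
    calc (n:ℝ) - n' = κ * (((n:ℝ) - n') / κ) := by field_simp
      _ ≤ κ * (2 * κ + C) := by gcongr
end

section
/- Let X = diag(1, −1, −1) and let E be the 3×3 real matrix whose (1,2) entry is 1 and all other entries are 0. Then there do not exist a 3×3 real matrix F and real numbers c, d such that X·F − F·X = −2·F + c·I and E·F − F·E = X + d·I, where I is the 3×3 identity matrix. (Equivalently, in 𝔭𝔤𝔩₃(ℝ) = 𝔤𝔩₃(ℝ)/ℝ·I there is no element F̄ with [X̄, F̄] = −2·F̄ and [Ē, F̄] = X̄.) -/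
/-- With `X = diag(1,−1,−1)` and `E = E₁₂` in 3×3 real matrices,
there is no matrix `F` and scalars `c, d` with `[X,F] = −2F + cI` and
`[E,F] = X + dI`; i.e. in `𝔭𝔤𝔩₃(ℝ)` there is no `F̄` with `[X̄,F̄] = −2F̄` and
`[Ē,F̄] = X̄`. -/
theorem stmt19 :
    ¬ ∃ (F : Matrix (Fin 3) (Fin 3) ℝ) (c d : ℝ),
      (Matrix.diagonal ![(1 : ℝ), -1, -1]) * F - F * (Matrix.diagonal ![(1 : ℝ), -1, -1]) =
        (-2 : ℝ) • F + c • (1 : Matrix (Fin 3) (Fin 3) ℝ) ∧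
      (Matrix.single 0 1 (1 : ℝ)) * F - F * (Matrix.single 0 1 (1 : ℝ)) =
        (Matrix.diagonal ![(1 : ℝ), -1, -1]) + d • (1 : Matrix (Fin 3) (Fin 3) ℝ) := by
  rintro ⟨F, c, d, -, h2⟩
  have h00 := congrFun (congrFun h2 0) 0
  have h11 := congrFun (congrFun h2 1) 1
  have h22 := congrFun (congrFun h2 2) 2
  simp [Matrix.mul_apply, Matrix.sub_apply, Matrix.single, Fin.sum_univ_three,
    Matrix.one_apply, Matrix.add_apply, Matrix.smul_apply, Matrix.diagonal_apply] at h00 h11 h22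
  linarith
end
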